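/- arXiv:2112.01594 — 5 statements merged into one kernel-verified Lean document; each statement's English description precedes it below -/
import Mathlib

section
/- In the two-list (L = 2) latent heterogeneity model with marginal cell probabilities p_x = E[λ^{|x|}(1−λ)^{2−|x|}] for a random variable λ ~ F supported on (0,1], the full-way interaction term satisfies γ = log( (E[λ(1−λ)])^2 / (E[λ^2] · E[(1−λ)^2]) ), and by the Cauchy–Schwarz inequality γ ≤ 0, with strict inequality γ < 0 whenever λ is not almost surely constant. -/
open MeasureTheory Filter

/-- A list inclusion pattern on `L` lists. -/
abbrev Pattern (L : ℕ) := Fin L → Bool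

/-- `|x|`, the number of lists on which the pattern `x` appears. -/
def weight {L : ℕ} (x : Pattern L) : ℕ := (Finset.univ.filter fun i => x i = true).card

/-- The full-way interaction term `γ = ∑_{x ∈ {0,1}^L} (-1)^{|x|+1} log p_x`. -/
noncomputable def fullInteraction {L : ℕ} (p : Pattern L → ℝ) : ℝ :=
  ∑ x : Pattern L, (-1 : ℝ) ^ (weight x + 1) * Real.log (p x)

/-!
Only three cell probabilities occur: `A = E[λ²]`, `B = E[λ(1-λ)]` and `C = E[(1-λ)²]`, and the
alternating sum of their logarithms is `log (B² / (A C))`. Cauchy–Schwarz for `λ` and `1 - λ`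
gives `B² ≤ A C`, and equality forces `1 - λ = t λ` almost surely, i.e. `λ = 1 / (1 + t)`.
-/

section CauchySchwarz

variable {α : Type*} [MeasurableSpace α] {μ : Measure α} {f g : α → ℝ}

theorem integral_sub_const_mul_sq (hf : MemLp f 2 μ) (hg : MemLp g 2 μ) (t : ℝ) :
    ∫ x, (g x - t * f x) ^ 2 ∂μ =
      ∫ x, g x ^ 2 ∂μ - 2 * t * ∫ x, f x * g x ∂μ + t ^ 2 * ∫ x, f x ^ 2 ∂μ := by
  have hfg : Integrable (fun x => f x * g x) μ := hf.integrable_mul hg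
  calc ∫ x, (g x - t * f x) ^ 2 ∂μ
      = ∫ x, (g x ^ 2 - 2 * t * (f x * g x)) + t ^ 2 * f x ^ 2 ∂μ := by congr 1; ext x; ring
    _ = _ := by
      rw [integral_add, integral_sub, integral_const_mul, integral_const_mul]
      exacts [hg.integrable_sq, hfg.const_mul _, hg.integrable_sq.sub (hfg.const_mul _),
        hf.integrable_sq.const_mul _]

/-- Evaluating the quadratic `t ↦ ∫ (g - t f)²` at its minimiser `t = ⟪f, g⟫ / ‖f‖²`. -/
theorem integral_sub_div_mul_sq_mul (hf : MemLp f 2 μ) (hg : MemLp g 2 μ)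
    (hA : ∫ x, f x ^ 2 ∂μ ≠ 0) :
    (∫ x, (g x - (∫ x, f x * g x ∂μ) / (∫ x, f x ^ 2 ∂μ) * f x) ^ 2 ∂μ) * ∫ x, f x ^ 2 ∂μ =
      (∫ x, f x ^ 2 ∂μ) * (∫ x, g x ^ 2 ∂μ) - (∫ x, f x * g x ∂μ) ^ 2 := by
  rw [integral_sub_const_mul_sq hf hg]
  field_simp
  ring

theorem sq_integral_mul_le (hf : MemLp f 2 μ) (hg : MemLp g 2 μ) :
    (∫ x, f x * g x ∂μ) ^ 2 ≤ (∫ x, f x ^ 2 ∂μ) * ∫ x, g x ^ 2 ∂μ := by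
  rcases (integral_nonneg fun x => sq_nonneg (f x) : 0 ≤ ∫ x, f x ^ 2 ∂μ).eq_or_lt with hA | hA
  · have hf0 : f =ᵐ[μ] 0 := by
      filter_upwards [(integral_eq_zero_iff_of_nonneg (fun x => sq_nonneg (f x))
        hf.integrable_sq).mp hA.symm] with x hx
      exact pow_eq_zero_iff two_ne_zero |>.mp hx
    rw [← hA, integral_congr_ae (g := 0) (by filter_upwards [hf0] with x hx; simp [hx])]
    simp
  · have hQ : 0 ≤ ∫ x, (g x - (∫ x, f x * g x ∂μ) / (∫ x, f x ^ 2 ∂μ) * f x) ^ 2 ∂μ :=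
      integral_nonneg fun x => sq_nonneg _
    nlinarith [integral_sub_div_mul_sq_mul hf hg hA.ne', mul_nonneg hQ hA.le]

theorem ae_eq_const_mul_of_sq_integral_mul_eq (hf : MemLp f 2 μ) (hg : MemLp g 2 μ)
    (hA : ∫ x, f x ^ 2 ∂μ ≠ 0)
    (h : (∫ x, f x * g x ∂μ) ^ 2 = (∫ x, f x ^ 2 ∂μ) * ∫ x, g x ^ 2 ∂μ) :
    ∀ᵐ x ∂μ, g x = (∫ x, f x * g x ∂μ) / (∫ x, f x ^ 2 ∂μ) * f x := by
  have hQ := integral_sub_div_mul_sq_mul hf hg hA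
  rw [h, sub_self, mul_eq_zero, or_iff_left hA] at hQ
  have hint := (hg.sub (hf.const_mul ((∫ x, f x * g x ∂μ) / ∫ x, f x ^ 2 ∂μ))).integrable_sq
  filter_upwards [(integral_eq_zero_iff_of_nonneg (fun x => sq_nonneg _) hint).mp hQ] with x hx
  exact sub_eq_zero.mp (pow_eq_zero_iff two_ne_zero |>.mp hx)

end CauchySchwarz

theorem weight_two (a b : Bool) : weight ![a, b] = a.toNat + b.toNat := by
  cases a <;> cases b <;> decide

theorem fullInteraction_two (p : Pattern 2 → ℝ) :
    fullInteraction p = Real.log (p ![true, false]) + Real.log (p ![false, true])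
      - Real.log (p ![true, true]) - Real.log (p ![false, false]) := by
  rw [fullInteraction, ← (finTwoArrowEquiv Bool).symm.sum_comp, Fintype.sum_prod_type]
  simp [weight_two]
  ring

theorem exists_ae_eq_const_of_ae_one_sub_eq_mul {α : Type*} [MeasurableSpace α] {μ : Measure α}
    {u : α → ℝ} {t : ℝ} (h : ∀ᵐ x ∂μ, 1 - u x = t * u x) : ∃ c, ∀ᵐ x ∂μ, u x = c := by
  refine ⟨1 / (1 + t), h.mono fun x hx => ?_⟩
  have ht : 1 + t ≠ 0 := fun ht => by rw [show t = -1 by linarith] at hx; linarith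
  field_simp
  linarith

/-- In the two-list (`L = 2`) latent heterogeneity model with marginal cell
probabilities `p_x = E[λ^{|x|} (1-λ)^{2-|x|}]` for `λ ~ F` supported on `(0,1]`, the full-way
interaction term satisfies `γ = log((E[λ(1-λ)])² / (E[λ²]·E[(1-λ)²]))`, and by the
Cauchy–Schwarz inequality `γ ≤ 0`, with strict inequality `γ < 0` whenever `λ` is not almost
surely constant. -/
theorem two_list_heterogeneity_gamma_nonpositive
    (F : Measure ℝ) [IsProbabilityMeasure F] (hF : F ((Set.Ioc (0 : ℝ) 1)ᶜ) = 0)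
    (p : Pattern 2 → ℝ)
    (hpdef : ∀ x, p x = ∫ l, l ^ (weight x) * (1 - l) ^ (2 - weight x) ∂F)
    (hp : ∀ x, 0 < p x) :
    fullInteraction p =
        Real.log ((∫ l, l * (1 - l) ∂F) ^ 2 / ((∫ l, l ^ 2 ∂F) * (∫ l, (1 - l) ^ 2 ∂F))) ∧
      fullInteraction p ≤ 0 ∧
      ((¬ ∃ c : ℝ, ∀ᵐ l ∂F, l = c) → fullInteraction p < 0) := by
  have hlam : MemLp (fun l : ℝ => l) 2 F := by
    refine .of_bound measurable_id.aestronglyMeasurable 1 ?_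
    filter_upwards [ae_iff.mpr hF] with l hl
    rw [Real.norm_eq_abs, abs_le]
    exact ⟨by linarith [hl.1], hl.2⟩
  have h1lam : MemLp (fun l : ℝ => 1 - l) 2 F := (memLp_const 1).sub hlam
  have hp11 : p ![true, true] = ∫ l, l ^ 2 ∂F := by simp [hpdef, weight_two]
  have hp10 : p ![true, false] = ∫ l, l * (1 - l) ∂F := by simp [hpdef, weight_two]
  have hp01 : p ![false, true] = ∫ l, l * (1 - l) ∂F := by simp [hpdef, weight_two]
  have hp00 : p ![false, false] = ∫ l, (1 - l) ^ 2 ∂F := by simp [hpdef, weight_two]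
  have hA := hp11 ▸ hp ![true, true]
  have hB := hp10 ▸ hp ![true, false]
  have hC := hp00 ▸ hp ![false, false]
  have hγ : fullInteraction p = Real.log ((∫ l, l * (1 - l) ∂F) ^ 2 /
      ((∫ l, l ^ 2 ∂F) * (∫ l, (1 - l) ^ 2 ∂F))) := by
    rw [fullInteraction_two, hp11, hp10, hp01, hp00, Real.log_div (by positivity) (by positivity),
      Real.log_mul hA.ne' hC.ne', Real.log_pow]
    push_cast
    ring
  have hCS : (∫ l, l * (1 - l) ∂F) ^ 2 ≤ (∫ l, l ^ 2 ∂F) * ∫ l, (1 - l) ^ 2 ∂F :=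
    sq_integral_mul_le hlam h1lam
  refine ⟨hγ, hγ ▸ Real.log_nonpos (by positivity) ((div_le_one (by positivity)).mpr hCS),
    fun hnc => hγ ▸ Real.log_neg (by positivity) ((div_lt_one (by positivity)).mpr ?_)⟩
  refine hCS.lt_of_ne fun hCS_eq => hnc ?_
  exact exists_ae_eq_const_of_ae_one_sub_eq_mul
    (ae_eq_const_mul_of_sq_integral_mul_eq hlam h1lam hA.ne' hCS_eq)
end

section
/- In the three-list (L = 3) Beta heterogeneity model with λ ~ Beta(a, b), a, b > 0, and marginal cell probabilities p_x = E[λ^{|x|}(1−λ)^{3−|x|}] for x ∈ {0,1}^3, the full-way interaction term γ = Σ_{x ∈ {0,1}^3} (−1)^{|x|+1} log p_x satisfies γ = log( a(b+1)^2(a+2) / (b(a+1)^2(b+2)) ). -/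
open MeasureTheory Filter

/-- The all-zero (unobserved) inclusion pattern. -/
def zeroPat (L : ℕ) : Pattern L := fun _ => false

/-- The expectation `E[f(λ)]` of `f(λ)` for `λ ~ Beta(a, b)`, i.e. with respect to the density
proportional to `λ^{a-1} (1-λ)^{b-1}` on `(0,1)`. -/
noncomputable def betaExp (a b : ℝ) (f : ℝ → ℝ) : ℝ :=
  (Real.Gamma (a + b) / (Real.Gamma a * Real.Gamma b)) *
    ∫ l in Set.Ioo (0 : ℝ) 1, f l * l ^ (a - 1) * (1 - l) ^ (b - 1)

/-- The marginal cell probability `p_x = E[λ^{|x|} (1-λ)^{L-|x|}]` of the inclusion pattern `x`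
in the Beta heterogeneity model with `L` lists and `λ ~ Beta(a, b)`. -/
noncomputable def betaCellProb (L : ℕ) (a b : ℝ) (x : Pattern L) : ℝ :=
  betaExp a b fun l => l ^ (weight x) * (1 - l) ^ (L - weight x)

lemma betaReal {u v : ℝ} (hu : 0 < u) (hv : 0 < v) :
    ∫ x in Set.Ioo (0:ℝ) 1, x ^ (u-1) * (1-x) ^ (v-1) =
      Real.Gamma u * Real.Gamma v / Real.Gamma (u+v) := by
  have hG := Complex.Gamma_mul_Gamma_eq_betaIntegral (s := (u:ℂ)) (t := (v:ℂ))
    (by simpa using hu) (by simpa using hv)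
  have hB : Complex.betaIntegral u v =
      ((∫ x in (0:ℝ)..1, x ^ (u-1) * (1-x) ^ (v-1) : ℝ) : ℂ) := by
    rw [Complex.betaIntegral, ← intervalIntegral.integral_ofReal]
    refine intervalIntegral.integral_congr fun x hx => ?_
    rw [Set.uIcc_of_le (by norm_num)] at hx
    rw [show ((u:ℂ)-1) = ((u-1:ℝ):ℂ) by push_cast; ring,
       show ((v:ℂ)-1) = ((v-1:ℝ):ℂ) by push_cast; ring,
       show (1 - (x:ℂ)) = ((1-x:ℝ):ℂ) by push_cast; ring,
       ← Complex.ofReal_cpow hx.1, ← Complex.ofReal_cpow (by linarith [hx.2] : (0:ℝ) ≤ 1-x)]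
    push_cast
    ring
  have hIoo : (∫ x in (0:ℝ)..1, x ^ (u-1) * (1-x) ^ (v-1) : ℝ) =
      ∫ x in Set.Ioo (0:ℝ) 1, x ^ (u-1) * (1-x) ^ (v-1) := by
    rw [intervalIntegral.integral_of_le (by norm_num), integral_Ioc_eq_integral_Ioo]
  rw [hB, hIoo] at hG
  have := congrArg Complex.re hG
  rw [← Complex.ofReal_add, Complex.Gamma_ofReal, Complex.Gamma_ofReal, Complex.Gamma_ofReal] at this
  simp only [← Complex.ofReal_mul, Complex.ofReal_re] at this
  rw [this, mul_div_cancel_left₀ _ (Real.Gamma_pos_of_pos (by linarith : (0:ℝ) < u+v)).ne']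


lemma betaMoment {a b : ℝ} (ha : 0 < a) (hb : 0 < b) (k m : ℕ) :
    (∫ l in Set.Ioo (0:ℝ) 1, (l ^ k * (1-l) ^ m) * l ^ (a-1) * (1-l) ^ (b-1)) =
      Real.Gamma (a+k) * Real.Gamma (b+m) / Real.Gamma (a+k+(b+m)) := by
  have hcongr : ∀ l ∈ Set.Ioo (0:ℝ) 1,
      (l ^ k * (1-l) ^ m) * l ^ (a-1) * (1-l) ^ (b-1) =
        l ^ (a+k-1) * (1-l) ^ (b+m-1) := by
    intro l hl
    have h1 : (0:ℝ) < l := hl.1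
    have h2 : (0:ℝ) < 1 - l := by linarith [hl.2]
    rw [show a + (k:ℝ) - 1 = (k:ℝ) + (a-1) by ring,
      show b + (m:ℝ) - 1 = (m:ℝ) + (b-1) by ring,
      Real.rpow_add h1, Real.rpow_add h2, Real.rpow_natCast, Real.rpow_natCast]
    ring
  rw [setIntegral_congr_fun measurableSet_Ioo hcongr]
  exact betaReal (by positivity) (by positivity)

lemma Gamma_nat_add {x : ℝ} (hx : 0 < x) (k : ℕ) :
    Real.Gamma (x + k) = (∏ i ∈ Finset.range k, (x + i)) * Real.Gamma x := by
  induction k with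
  | zero => simp
  | succ n ih =>
    have : x + (n+1 : ℕ) = (x + n) + 1 := by push_cast; ring
    rw [this, Real.Gamma_add_one (by positivity), ih, Finset.prod_range_succ]
    ring

lemma cell_eq {a b : ℝ} (ha : 0 < a) (hb : 0 < b) (x : Pattern 3) :
    betaCellProb 3 a b x =
      (∏ i ∈ Finset.range (weight x), (a + i)) *
        (∏ i ∈ Finset.range (3 - weight x), (b + i)) /
        ∏ i ∈ Finset.range 3, (a + b + i) := by
  have hk : weight x ≤ 3 := by
    have := Finset.card_filter_le (Finset.univ : Finset (Fin 3)) (fun i => x i = true)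
    simpa [weight] using this
  rw [betaCellProb, betaExp, betaMoment ha hb]
  have h3 : a + (weight x : ℝ) + (b + ((3 - weight x : ℕ) : ℝ)) = a + b + 3 := by
    have : ((3 - weight x : ℕ) : ℝ) = 3 - (weight x : ℝ) := by
      push_cast [hk]; ring
    rw [this]; ring
  rw [h3, Gamma_nat_add ha, Gamma_nat_add hb, show a + b + 3 = (a+b) + (3:ℕ) by norm_num,
    Gamma_nat_add (by positivity)]
  have g1 := Real.Gamma_pos_of_pos ha
  have g2 := Real.Gamma_pos_of_pos hb
  have g3 := Real.Gamma_pos_of_pos (show (0:ℝ) < a + b by positivity)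
  have hp : (0:ℝ) < ∏ i ∈ Finset.range 3, (a + b + i) := by
    apply Finset.prod_pos; intro i _; positivity
  field_simp

/-- In the three-list (`L = 3`) Beta heterogeneity model with `λ ~ Beta(a, b)`,
`a, b > 0`, and marginal cell probabilities `p_x = E[λ^{|x|} (1-λ)^{3-|x|}]` for `x ∈ {0,1}³`,
the full-way interaction term `γ = ∑_{x ∈ {0,1}³} (-1)^{|x|+1} log p_x` satisfies
`γ = log(a (b+1)² (a+2) / (b (a+1)² (b+2)))`. -/
theorem three_list_beta_model_gamma
    (a b : ℝ) (ha : 0 < a) (hb : 0 < b) :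
    fullInteraction (betaCellProb 3 a b) =
      Real.log (a * (b + 1) ^ 2 * (a + 2) / (b * (a + 1) ^ 2 * (b + 2))) := by
  set g : ℕ → ℝ := fun k => (-1 : ℝ) ^ (k + 1) *
    Real.log ((∏ i ∈ Finset.range k, (a + i)) * (∏ i ∈ Finset.range (3 - k), (b + i)) /
      ∏ i ∈ Finset.range 3, (a + b + i)) with hg
  have h1 : fullInteraction (betaCellProb 3 a b) = ∑ x : Pattern 3, g (weight x) := by
    rw [fullInteraction]
    exact Finset.sum_congr rfl fun x _ => by rw [cell_eq ha hb x]
  rw [h1, Finset.sum_comp g weight]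
  have himg : (Finset.univ : Finset (Pattern 3)).image weight = {0, 1, 2, 3} := by decide
  have hc0 : ((Finset.univ : Finset (Pattern 3)).filter fun x => weight x = 0).card = 1 := by decide
  have hc1 : ((Finset.univ : Finset (Pattern 3)).filter fun x => weight x = 1).card = 3 := by decide
  have hc2 : ((Finset.univ : Finset (Pattern 3)).filter fun x => weight x = 2).card = 3 := by decide
  have hc3 : ((Finset.univ : Finset (Pattern 3)).filter fun x => weight x = 3).card = 1 := by decide
  rw [himg]
  rw [show ({0,1,2,3} : Finset ℕ) = insert 0 (insert 1 (insert 2 {3})) from rfl]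
  rw [Finset.sum_insert (by decide), Finset.sum_insert (by decide),
    Finset.sum_insert (by decide), Finset.sum_singleton, hc0, hc1, hc2, hc3]
  simp only [hg, Finset.prod_range_succ, Finset.prod_range_zero, one_smul, smul_eq_mul]
  push_cast
  have ha' : a ≠ 0 := ha.ne'
  have hb' : b ≠ 0 := hb.ne'
  have ha1 : a + 1 ≠ 0 := by positivity
  have ha2 : a + 2 ≠ 0 := by positivity
  have hb1 : b + 1 ≠ 0 := by positivity
  have hb2 : b + 2 ≠ 0 := by positivity
  have hd0 : a + b ≠ 0 := by positivity
  have hd1 : a + b + 1 ≠ 0 := by positivity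
  have hd2 : a + b + 2 ≠ 0 := by positivity
  norm_num
  have e0 : Real.log (b * (b + 1) * (b + 2) / ((a + b) * (a + b + 1) * (a + b + 2))) =
      Real.log b + Real.log (b+1) + Real.log (b+2) -
        (Real.log (a+b) + Real.log (a+b+1) + Real.log (a+b+2)) := by
    rw [Real.log_div (by positivity) (by positivity),
      Real.log_mul (by positivity) (by positivity), Real.log_mul (by positivity) (by positivity),
      Real.log_mul (by positivity) (by positivity), Real.log_mul (by positivity) (by positivity)]
  have e1 : Real.log (a * (b * (b + 1)) / ((a + b) * (a + b + 1) * (a + b + 2))) =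
      Real.log a + (Real.log b + Real.log (b+1)) -
        (Real.log (a+b) + Real.log (a+b+1) + Real.log (a+b+2)) := by
    rw [Real.log_div (by positivity) (by positivity),
      Real.log_mul (by positivity) (by positivity), Real.log_mul (by positivity) (by positivity),
      Real.log_mul (by positivity) (by positivity), Real.log_mul (by positivity) (by positivity)]
  have e2 : Real.log (a * (a + 1) * b / ((a + b) * (a + b + 1) * (a + b + 2))) =
      Real.log a + Real.log (a+1) + Real.log b -
        (Real.log (a+b) + Real.log (a+b+1) + Real.log (a+b+2)) := by
    rw [Real.log_div (by positivity) (by positivity),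
      Real.log_mul (by positivity) (by positivity), Real.log_mul (by positivity) (by positivity),
      Real.log_mul (by positivity) (by positivity), Real.log_mul (by positivity) (by positivity)]
  have e3 : Real.log (a * (a + 1) * (a + 2) / ((a + b) * (a + b + 1) * (a + b + 2))) =
      Real.log a + Real.log (a+1) + Real.log (a+2) -
        (Real.log (a+b) + Real.log (a+b+1) + Real.log (a+b+2)) := by
    rw [Real.log_div (by positivity) (by positivity),
      Real.log_mul (by positivity) (by positivity), Real.log_mul (by positivity) (by positivity),
      Real.log_mul (by positivity) (by positivity), Real.log_mul (by positivity) (by positivity)]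
  have e4 : Real.log (a * (b + 1) ^ 2 * (a + 2) / (b * (a + 1) ^ 2 * (b + 2))) =
      Real.log a + 2 * Real.log (b+1) + Real.log (a+2) -
        (Real.log b + 2 * Real.log (a+1) + Real.log (b+2)) := by
    rw [Real.log_div (by positivity) (by positivity),
      Real.log_mul (by positivity) (by positivity), Real.log_mul (by positivity) (by positivity),
      Real.log_mul (by positivity) (by positivity), Real.log_mul (by positivity) (by positivity),
      Real.log_pow, Real.log_pow]
    push_cast; ring
  rw [e0, e1, e2, e3, e4]
  ring
end

section
/- In the three-list (L = 3) Beta heterogeneity model with λ ~ Beta(a, b), a, b > 0, the full-way interaction term γ = log( a(b+1)^2(a+2) / (b(a+1)^2(b+2)) ) is strictly positive when a > b (equivalently, when E[λ] = a/(a+b) > 1/2), strictly negative when a < b (equivalently E[λ] < 1/2), and zero when a = b. Consequently, an estimator consistent under the assumption γ = 0 has strictly positive asymptotic relative bias when a > b and strictly negative asymptotic relative bias when a < b. -/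
/-- In the three-list Beta heterogeneity model with `λ ~ Beta(a, b)`,
`a, b > 0`, the full-way interaction term `γ = log(a (b+1)² (a+2) / (b (a+1)² (b+2)))` is
strictly positive when `a > b` (equivalently, when `E[λ] = a/(a+b) > 1/2`), strictly negative
when `a < b` (equivalently `E[λ] < 1/2`), and zero when `a = b`. Consequently, an estimator
consistent under the assumption `γ = 0`, whose asymptotic relative bias equals `p_0 (e^γ - 1)`,
has strictly positive asymptotic relative bias when `a > b` and strictly negative asymptotic
relative bias when `a < b`. -/
theorem three_list_beta_gamma_sign
    (a b : ℝ) (ha : 0 < a) (hb : 0 < b) :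
    (a > b → 0 < Real.log (a * (b + 1) ^ 2 * (a + 2) / (b * (a + 1) ^ 2 * (b + 2)))) ∧
      (a < b → Real.log (a * (b + 1) ^ 2 * (a + 2) / (b * (a + 1) ^ 2 * (b + 2))) < 0) ∧
      (a = b → Real.log (a * (b + 1) ^ 2 * (a + 2) / (b * (a + 1) ^ 2 * (b + 2))) = 0) ∧
      ((a > b ↔ a / (a + b) > 1 / 2) ∧ (a < b ↔ a / (a + b) < 1 / 2)) ∧
      ∀ p₀ : ℝ, 0 < p₀ →
        (a > b → 0 < p₀ *
          (Real.exp (Real.log (a * (b + 1) ^ 2 * (a + 2) / (b * (a + 1) ^ 2 * (b + 2)))) - 1)) ∧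
        (a < b → p₀ *
          (Real.exp (Real.log (a * (b + 1) ^ 2 * (a + 2) / (b * (a + 1) ^ 2 * (b + 2)))) - 1)
            < 0) := by
  have hN : 0 < a * (b + 1) ^ 2 * (a + 2) := by positivity
  have hD : 0 < b * (a + 1) ^ 2 * (b + 2) := by positivity
  have hdiff : a * (b + 1) ^ 2 * (a + 2) - b * (a + 1) ^ 2 * (b + 2)
      = (a - b) * (a + b + 2) := by ring
  have hab2 : 0 < a + b + 2 := by linarith
  have hgt : a > b → 1 < a * (b + 1) ^ 2 * (a + 2) / (b * (a + 1) ^ 2 * (b + 2)) := by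
    intro h
    rw [lt_div_iff₀ hD, one_mul]
    nlinarith
  have hlt : a < b → a * (b + 1) ^ 2 * (a + 2) / (b * (a + 1) ^ 2 * (b + 2)) < 1 := by
    intro h
    rw [div_lt_one hD]
    nlinarith
  refine ⟨fun h => Real.log_pos (hgt h),
    fun h => Real.log_neg (by positivity) (hlt h),
    fun h => ?_, ⟨?_, ?_⟩, fun p₀ hp₀ => ⟨fun h => ?_, fun h => ?_⟩⟩
  · subst h
    rw [div_self hD.ne']
    exact Real.log_one
  · rw [gt_iff_lt, gt_iff_lt, lt_div_iff₀ (by linarith : (0:ℝ) < a + b)]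
    constructor <;> intro h <;> linarith
  · rw [div_lt_iff₀ (by linarith : (0:ℝ) < a + b)]
    constructor <;> intro h <;> linarith
  · rw [Real.exp_log (by positivity)]
    have := hgt h
    nlinarith
  · rw [Real.exp_log (by positivity)]
    have := hlt h
    nlinarith
end

section
/- With L ≥ 3 lists, if there exist two list indices i ≠ j such that the inclusion indicators W_i and W_j are conditionally independent given the remaining indicators (W_k)_{k ≠ i,j}, and all cell probabilities p_x = P(W = x) are strictly positive, then the full-way interaction term γ = Σ_{x ∈ {0,1}^L} (−1)^{|x|+1} log p_x equals zero; i.e., assumption A3.1 of no full-way interaction is satisfied. -/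
/-!
Conditional independence of `W_i` and `W_j` given the other lists says that in every stratum of
the other lists the cell probabilities factor as `N a b * S = r a * c b`, so the 2×2 table of the
stratum has odds ratio one: its log-probabilities have zero `(i, j)`-interaction contrast
`log p₁₁ + log p₀₀ - log p₁₀ - log p₀₁`. Flipping coordinate `i` or `j` is an involution of the
patterns that reverses the sign `(-1)^|x|`, so summing the contrast against the signs gives `4γ`
up to sign; hence `γ = 0`.
-/

open MeasureTheory

theorem cross_mul_eq_of_div_eq_div_mul_div {α β : Type*} {N : α → β → ℝ} {r : α → ℝ}
    {c : β → ℝ} {S : ℝ} (hS : S ≠ 0) (h : ∀ a b, N a b / S = r a / S * (c b / S))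
    (a a' : α) (b b' : β) :
    N a b * N a' b' = N a' b * N a b' := by
  have hfac : ∀ a b, N a b * S = r a * c b := fun a b => by
    have := h a b
    field_simp at this
    linear_combination this
  refine mul_right_cancel₀ (mul_ne_zero hS hS) ?_
  linear_combination (N a' b' * S) * hfac a b + (r a * c b) * hfac a' b'
    - (N a b' * S) * hfac a' b - (r a' * c b) * hfac a b'

open Function

theorem eq_update_update_iff {α β : Type*} [DecidableEq α] {i j : α} (hij : i ≠ j)
    {x y : α → β} {a b : β} :
    y = update (update x i a) j b ↔ y i = a ∧ y j = b ∧ ∀ k, k ≠ i → k ≠ j → y k = x k := by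
  constructor
  · rintro rfl
    exact ⟨by simp [hij], by simp, fun k hki hkj => by simp [hki, hkj]⟩
  · rintro ⟨hi, hj, hk⟩
    ext k
    by_cases hkj : k = j
    · subst hkj; simp [hj]
    by_cases hki : k = i
    · subst hki; simp [hkj, hi]
    simp [hki, hkj, hk k hki hkj]

section Flip

variable {L : ℕ}

def flipAt (k : Fin L) (x : Pattern L) : Pattern L := update x k (!x k)

theorem flipAt_involutive (k : Fin L) : Involutive (flipAt k) := fun x => by
  simp [flipAt]

theorem weight_flipAt_add_one {k : Fin L} {x : Pattern L} (hx : x k = true) :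
    weight (flipAt k x) + 1 = weight x := by
  have : (Finset.univ.filter fun m => flipAt k x m = true)
      = (Finset.univ.filter fun m => x m = true).erase k := by
    ext m
    by_cases hmk : m = k
    · subst hmk; simp [flipAt, hx]
    · simp [flipAt, update_apply, hmk]
  rw [weight, this, Finset.card_erase_add_one (by simp [hx]), weight]

theorem neg_one_pow_weight_flipAt (k : Fin L) (x : Pattern L) :
    (-1 : ℝ) ^ weight (flipAt k x) = -(-1) ^ weight x := by
  cases hx : x k
  · have hflip : flipAt k x k = true := by simp [flipAt, hx]
    rw [← weight_flipAt_add_one hflip, flipAt_involutive, pow_succ]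
    ring
  · rw [← weight_flipAt_add_one hx, pow_succ]
    ring

theorem sum_neg_one_pow_weight_mul_flipAt (k : Fin L) (g : Pattern L → ℝ) :
    ∑ x, (-1 : ℝ) ^ weight x * g (flipAt k x) = -∑ x, (-1 : ℝ) ^ weight x * g x := by
  conv_rhs => rw [← Equiv.sum_comp (flipAt_involutive k).toPerm]
  simp [neg_one_pow_weight_flipAt]

theorem sum_neg_one_pow_weight_mul_eq_zero_of_flipAt {f : Pattern L → ℝ} (i j : Fin L)
    (hf : ∀ x, f x + f (flipAt j (flipAt i x)) = f (flipAt i x) + f (flipAt j x)) :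
    ∑ x, (-1 : ℝ) ^ weight x * f x = 0 := by
  have hi := sum_neg_one_pow_weight_mul_flipAt i f
  have hj := sum_neg_one_pow_weight_mul_flipAt j f
  have hji := sum_neg_one_pow_weight_mul_flipAt i (fun y => f (flipAt j y))
  have hcontrast : ∑ x, (-1 : ℝ) ^ weight x *
      (f x + f (flipAt j (flipAt i x)) - f (flipAt i x) - f (flipAt j x)) = 0 :=
    Finset.sum_eq_zero fun x _ => by rw [hf x]; ring
  simp only [mul_sub, mul_add, Finset.sum_add_distrib, Finset.sum_sub_distrib] at hcontrast
  linarith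

theorem flipAt_eq_update_update {i j : Fin L} (hij : i ≠ j) (x : Pattern L) :
    update (update x i (x i)) j (x j) = x ∧
      update (update x i (!x i)) j (x j) = flipAt i x ∧
      update (update x i (x i)) j (!x j) = flipAt j x ∧
      update (update x i (!x i)) j (!x j) = flipAt j (flipAt i x) := by
  refine ⟨?_, ?_, ?_, ?_⟩ <;> ext k <;> simp only [flipAt, update_apply] <;> split_ifs <;>
    simp_all

theorem sum_neg_one_pow_weight_mul_eq_zero {f : Pattern L → ℝ} {i j : Fin L} (hij : i ≠ j)
    (hf : ∀ x, f (update (update x i true) j true) + f (update (update x i false) j false)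
      = f (update (update x i false) j true) + f (update (update x i true) j false)) :
    ∑ x, (-1 : ℝ) ^ weight x * f x = 0 := by
  have hcross : ∀ x a b, f (update (update x i a) j b) + f (update (update x i (!a)) j (!b))
      = f (update (update x i (!a)) j b) + f (update (update x i a) j (!b)) := by
    intro x a b
    cases a <;> cases b <;> simp only [Bool.not_true, Bool.not_false] <;> linarith [hf x]
  refine sum_neg_one_pow_weight_mul_eq_zero_of_flipAt i j fun x => ?_
  obtain ⟨hx, hi, hj, hji⟩ := flipAt_eq_update_update hij x
  simpa only [hx, hi, hj, hji] using hcross x (x i) (x j)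

end Flip

theorem conditionally_independent_lists_no_full_interaction_general
    {L : ℕ}
    {Ω : Type*} [MeasurableSpace Ω] (μ : Measure Ω) [IsProbabilityMeasure μ]
    (W : Ω → Pattern L)
    (i j : Fin L) (hij : i ≠ j)
    (p : Pattern L → ℝ)
    (hpdef : ∀ x : Pattern L, p x = (μ {ω | W ω = x}).toReal)
    (hpos : ∀ x, 0 < p x)
    (hci : ∀ (x : Pattern L) (a b : Bool),
      (μ {ω | W ω i = a ∧ W ω j = b ∧ ∀ k, k ≠ i → k ≠ j → W ω k = x k}).toReal /
          (μ {ω | ∀ k, k ≠ i → k ≠ j → W ω k = x k}).toReal =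
        ((μ {ω | W ω i = a ∧ ∀ k, k ≠ i → k ≠ j → W ω k = x k}).toReal /
            (μ {ω | ∀ k, k ≠ i → k ≠ j → W ω k = x k}).toReal) *
          ((μ {ω | W ω j = b ∧ ∀ k, k ≠ i → k ≠ j → W ω k = x k}).toReal /
            (μ {ω | ∀ k, k ≠ i → k ≠ j → W ω k = x k}).toReal)) :
    fullInteraction p = 0 := by
  have hcell : ∀ (x : Pattern L) (a b : Bool),
      (μ {ω | W ω i = a ∧ W ω j = b ∧ ∀ k, k ≠ i → k ≠ j → W ω k = x k}).toReal
        = p (update (update x i a) j b) := fun x a b => by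
    rw [hpdef]
    congr 2
    ext ω
    exact (eq_update_update_iff hij).symm
  have hstratum : ∀ x : Pattern L,
      0 < (μ {ω | ∀ k, k ≠ i → k ≠ j → W ω k = x k}).toReal := fun x =>
    (hcell x true true ▸ hpos _).trans_le <|
      ENNReal.toReal_mono (measure_ne_top _ _) (measure_mono fun ω h => h.2.2)
  have hodds : ∀ x : Pattern L,
      p (update (update x i true) j true) * p (update (update x i false) j false)
        = p (update (update x i false) j true) * p (update (update x i true) j false) :=
    fun x => by
      simpa only [hcell] using
        cross_mul_eq_of_div_eq_div_mul_div (hstratum x).ne' (hci x) true false true false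
  have hlog := sum_neg_one_pow_weight_mul_eq_zero (f := fun x => Real.log (p x)) hij fun x => by
    rw [← Real.log_mul (hpos _).ne' (hpos _).ne', ← Real.log_mul (hpos _).ne' (hpos _).ne',
      hodds]
  simp only [fullInteraction, pow_succ, mul_neg_one, neg_mul, Finset.sum_neg_distrib, hlog,
    neg_zero]

/-- With `L ≥ 3` lists, if there exist two list indices `i ≠ j` such that the
inclusion indicators `W_i` and `W_j` are conditionally independent given the remaining
indicators `(W_k)_{k ≠ i,j}`, i.e.
`P(W_i = a, W_j = b | (W_k)_{k≠i,j} = w) = P(W_i = a | rest = w) · P(W_j = b | rest = w)`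
for all `a, b` and all `w`, and all cell probabilities `p_x = P(W = x)` are strictly positive,
then the full-way interaction term `γ = ∑_{x ∈ {0,1}^L} (-1)^{|x|+1} log p_x` equals zero;
i.e. assumption A3.1 of no full-way interaction is satisfied. -/
theorem conditionally_independent_lists_no_full_interaction
    {L : ℕ} (hL : 3 ≤ L)
    {Ω : Type*} [MeasurableSpace Ω] (μ : Measure Ω) [IsProbabilityMeasure μ]
    (W : Ω → Pattern L) (hm : Measurable W)
    (i j : Fin L) (hij : i ≠ j)
    (p : Pattern L → ℝ)
    (hpdef : ∀ x : Pattern L, p x = (μ {ω | W ω = x}).toReal)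
    (hpos : ∀ x, 0 < p x)
    (hci : ∀ (x : Pattern L) (a b : Bool),
      (μ {ω | W ω i = a ∧ W ω j = b ∧ ∀ k, k ≠ i → k ≠ j → W ω k = x k}).toReal /
          (μ {ω | ∀ k, k ≠ i → k ≠ j → W ω k = x k}).toReal =
        ((μ {ω | W ω i = a ∧ ∀ k, k ≠ i → k ≠ j → W ω k = x k}).toReal /
            (μ {ω | ∀ k, k ≠ i → k ≠ j → W ω k = x k}).toReal) *
          ((μ {ω | W ω j = b ∧ ∀ k, k ≠ i → k ≠ j → W ω k = x k}).toReal /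
            (μ {ω | ∀ k, k ≠ i → k ≠ j → W ω k = x k}).toReal)) :
    fullInteraction p = 0 :=
  conditionally_independent_lists_no_full_interaction_general μ W i j hij p hpdef hpos hci
end

section
/- Let (p_x)_{x ∈ {0,1}^L} be strictly positive probabilities with full-way interaction term γ = Σ_x (−1)^{|x|+1} log p_x, and let q_x = p_x/(1−p_0) for x ≠ 0. Define p_0' = p_0 e^γ / (1 − p_0 + p_0 e^γ), so that p_0'/(1−p_0') = e^γ · p_0/(1−p_0), and define the modified probabilities p_x' = (1−p_0') q_x for x ≠ 0. Then (p_x')_{x ∈ {0,1}^L} is a strictly positive probability vector with the same zero-truncated distribution (q_x' = q_x for all x ≠ 0), and its full-way interaction term is zero: γ' = Σ_x (−1)^{|x|+1} log p_x' = 0. -/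
lemma sign_eq_prod {L : ℕ} (x : Pattern L) :
    (-1 : ℝ) ^ (weight x) = ∏ i, (if x i then (-1:ℝ) else 1) := by
  rw [Finset.prod_ite, Finset.prod_const, Finset.prod_const, one_pow, mul_one, weight]

lemma sum_sign (L : ℕ) (hL : 1 ≤ L) : ∑ x : Pattern L, (-1:ℝ)^(weight x) = 0 := by
  simp only [sign_eq_prod]
  have h := Finset.prod_univ_sum (κ := fun _ : Fin L => Bool)
    (t := fun _ => (Finset.univ : Finset Bool)) (f := fun _ b => if b then (-1:ℝ) else 1)
  rw [← Fintype.piFinset_univ, ← h]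
  have h0 : (∑ b : Bool, if b then (-1:ℝ) else 1) = 0 := by simp
  rw [Finset.prod_congr rfl (fun i _ => h0), Finset.prod_const]
  exact zero_pow (by simp; omega)

lemma weight_zeroPat (L : ℕ) : weight (zeroPat L) = 0 := by
  simp [weight, zeroPat]

lemma sum_sign' (L : ℕ) (hL : 1 ≤ L) :
    ∑ x : Pattern L, (-1:ℝ)^(weight x + 1) = 0 := by
  have := sum_sign L hL
  simp only [pow_succ, ← Finset.sum_mul, this, zero_mul]

/-- the tilting construction in the proof of the bias characterization.
Let `(p_x)` be strictly positive probabilities with full-way interaction term `γ`, let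
`q_x = p_x/(1-p_0)` for `x ≠ 0`, define `p_0' = p_0 e^γ / (1 - p_0 + p_0 e^γ)` (so that
`p_0'/(1-p_0') = e^γ p_0/(1-p_0)`), and define the modified probabilities
`p_x' = (1-p_0') q_x` for `x ≠ 0`. Then `(p_x')` is a strictly positive probability vector with
the same zero-truncated distribution (`q_x' = q_x` for all `x ≠ 0`), and its full-way
interaction term is zero: `γ' = ∑_x (-1)^{|x|+1} log p_x' = 0`. -/
theorem tilted_distribution_no_full_interaction
    {L : ℕ} (hL : 2 ≤ L) (p p' : Pattern L → ℝ)
    (hp : ∀ x, 0 < p x) (hsum : ∑ x : Pattern L, p x = 1)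
    (h0' : p' (zeroPat L) =
      p (zeroPat L) * Real.exp (fullInteraction p) /
        (1 - p (zeroPat L) + p (zeroPat L) * Real.exp (fullInteraction p)))
    (hx' : ∀ x : Pattern L, x ≠ zeroPat L →
      p' x = (1 - p' (zeroPat L)) * (p x / (1 - p (zeroPat L)))) :
    (∀ x, 0 < p' x) ∧
      (∑ x : Pattern L, p' x = 1) ∧
      (p' (zeroPat L) / (1 - p' (zeroPat L)) =
        Real.exp (fullInteraction p) * (p (zeroPat L) / (1 - p (zeroPat L)))) ∧
      (∀ x : Pattern L, x ≠ zeroPat L →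
        p' x / (1 - p' (zeroPat L)) = p x / (1 - p (zeroPat L))) ∧
      fullInteraction p' = 0 := by
  have hL1 : 1 ≤ L := by omega
  set P0 := p (zeroPat L) with hP0def
  set γ := fullInteraction p with hγdef
  set E := Real.exp γ with hEdef
  set D := 1 - P0 + P0 * E with hDdef
  have hEpos : 0 < E := Real.exp_pos _
  have hP0pos : 0 < P0 := hp _
  -- P0 < 1
  have hy : (fun _ => true : Pattern L) ≠ zeroPat L := by
    intro h
    have := congrFun h ⟨0, by omega⟩
    simp [zeroPat] at this
  have hP0lt1 : P0 < 1 := by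
    rw [← hsum]
    exact Finset.single_lt_sum hy (Finset.mem_univ _) (Finset.mem_univ _)
      (hp _) (fun k _ _ => (hp k).le)
  have h1P0 : 0 < 1 - P0 := by linarith
  have h1P0ne : (1 : ℝ) - P0 ≠ 0 := ne_of_gt h1P0
  have hDpos : 0 < D := by
    have : 0 < P0 * E := mul_pos hP0pos hEpos
    rw [hDdef]; linarith
  have hDne : D ≠ 0 := ne_of_gt hDpos
  have hp'0 : p' (zeroPat L) = P0 * E / D := h0'
  have h1m : 1 - p' (zeroPat L) = (1 - P0) / D := by
    rw [hp'0]; field_simp; ring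
  have hp'0pos : 0 < p' (zeroPat L) := by
    rw [hp'0]; positivity
  have h1mpos : 0 < 1 - p' (zeroPat L) := by
    rw [h1m]; positivity
  have h1mne : 1 - p' (zeroPat L) ≠ 0 := ne_of_gt h1mpos
  have hpos : ∀ x, 0 < p' x := by
    intro x
    by_cases hx : x = zeroPat L
    · rw [hx]; exact hp'0pos
    · rw [hx' x hx]
      exact mul_pos h1mpos (div_pos (hp x) h1P0)
  have hsumerase : ∑ x ∈ Finset.univ.erase (zeroPat L), p x = 1 - P0 := by
    have := Finset.add_sum_erase Finset.univ p (Finset.mem_univ (zeroPat L))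
    rw [hsum] at this
    linarith
  refine ⟨hpos, ?_, ?_, ?_, ?_⟩
  · -- sum = 1
    rw [← Finset.add_sum_erase Finset.univ p' (Finset.mem_univ (zeroPat L))]
    have : ∑ x ∈ Finset.univ.erase (zeroPat L), p' x
        = ∑ x ∈ Finset.univ.erase (zeroPat L), (1 - p' (zeroPat L)) * (p x / (1 - P0)) := by
      refine Finset.sum_congr rfl fun x hx => hx' x (Finset.ne_of_mem_erase hx)
    rw [this]
    simp only [mul_div_assoc, ← Finset.mul_sum, ← Finset.sum_div, hsumerase,
      div_self h1P0ne, mul_one]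
    ring
  · -- odds ratio
    rw [h1m, hp'0]
    field_simp
  · -- same truncated distribution
    intro x hx
    rw [hx' x hx, mul_comm, mul_div_assoc, div_self h1mne, mul_one]
  · -- zero full interaction
    rw [fullInteraction,
      ← Finset.add_sum_erase Finset.univ _ (Finset.mem_univ (zeroPat L))]
    have hlog0 : Real.log (p' (zeroPat L)) = Real.log P0 + γ - Real.log D := by
      rw [hp'0, Real.log_div (by positivity) hDne,
        Real.log_mul (ne_of_gt hP0pos) (ne_of_gt hEpos), hEdef, Real.log_exp]
    have hlog1m : Real.log (1 - p' (zeroPat L)) = Real.log (1 - P0) - Real.log D := by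
      rw [h1m, Real.log_div h1P0ne hDne]
    have hterm : ∀ x ∈ Finset.univ.erase (zeroPat L),
        (-1:ℝ) ^ (weight x + 1) * Real.log (p' x)
          = (-1:ℝ) ^ (weight x + 1) * (Real.log (1 - p' (zeroPat L)) - Real.log (1 - P0))
            + (-1:ℝ) ^ (weight x + 1) * Real.log (p x) := by
      intro x hx
      rw [hx' x (Finset.ne_of_mem_erase hx),
        Real.log_mul h1mne (ne_of_gt (div_pos (hp x) h1P0)),
        Real.log_div (ne_of_gt (hp x)) h1P0ne]
      ring
    rw [Finset.sum_congr rfl hterm, Finset.sum_add_distrib, ← Finset.sum_mul]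
    have hsgn : ∑ x ∈ Finset.univ.erase (zeroPat L), (-1:ℝ) ^ (weight x + 1) = 1 := by
      have h := Finset.add_sum_erase Finset.univ (fun x : Pattern L => (-1:ℝ) ^ (weight x + 1))
        (Finset.mem_univ (zeroPat L))
      rw [sum_sign' L hL1] at h
      simp only [weight_zeroPat, zero_add, pow_one] at h
      linarith
    have hγsum : ∑ x ∈ Finset.univ.erase (zeroPat L),
        (-1:ℝ) ^ (weight x + 1) * Real.log (p x) = γ + Real.log P0 := by
      have h := Finset.add_sum_erase Finset.univ
        (fun x : Pattern L => (-1:ℝ) ^ (weight x + 1) * Real.log (p x))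
        (Finset.mem_univ (zeroPat L))
      rw [← fullInteraction, ← hγdef] at h
      simp only [weight_zeroPat, zero_add, pow_one, neg_one_mul, ← hP0def] at h
      linarith
    rw [hsgn, hγsum, hlog0, hlog1m, weight_zeroPat]
    ring
end
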